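/- Any edge-regular graph with parameters (9,4,1) is isomorphic to the 3×3 rook graph. -/

import Mathlib

/-!
Every edge lies in a unique triangle, so the neighbourhood of a vertex `v` is a perfect matching
`{r₀r₁, c₀c₁}` with no edges between its two halves. Counting the edges from `N(v)` to the four
non-neighbours of `v`, each of which meets every matching edge at most once, shows that two
non-adjacent vertices have exactly two common neighbours. So `cᵢ` and `rⱼ` have a common
neighbour `aᵢⱼ ≠ v`; these are distinct and lie outside `N[v]`, and since `N(cᵢ)` and `N(rⱼ)` are
matchings too, the rows and columns of the array `[[v, r], [c, a]]` are triangles. This is an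
injective homomorphism from the rook graph to `G`, hence an isomorphism, both graphs being
4-regular on 9 vertices.
-/

def rook3 : SimpleGraph (Fin 3 × Fin 3) where
  Adj x y := x ≠ y ∧ (x.1 = y.1 ∨ x.2 = y.2)
  symm := by
    constructor
    rintro x y ⟨hne, h⟩
    exact ⟨hne.symm, by tauto⟩
  loopless := by constructor; rintro x ⟨hne, -⟩; exact hne rfl

instance : DecidableRel rook3.Adj := fun x y => inferInstanceAs (Decidable (x ≠ y ∧ _))

theorem rook3_isRegularOfDegree : rook3.IsRegularOfDegree 4 := by
  intro p
  fin_cases p <;> rfl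

open Finset Function SimpleGraph

-- The array `![![v, r 0, r 1], ![c 0, a 0 0, a 0 1], ![c 1, a 1 0, a 1 1]]`.
def frameArray {V : Type*} (v : V) (r c : Fin 2 → V) (a : Fin 2 → Fin 2 → V) (p : Fin 3 × Fin 3) :
    V :=
  Matrix.vecCons (Matrix.vecCons v r) (fun i => Matrix.vecCons (c i) (a i)) p.1 p.2

namespace SimpleGraph

variable {V : Type*} {G : SimpleGraph V} {k : ℕ} {u v w x y z : V} {r c : Fin 2 → V}
  {a : Fin 2 → Fin 2 → V}

theorem pairwise_adj_vecCons {n : ℕ} {y : Fin n → V} (hx : ∀ j, G.Adj x (y j))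
    (hy : Pairwise (G.Adj on y)) : Pairwise (G.Adj on Matrix.vecCons x y) :=
  pairwise_fin_succ_iff.mpr ⟨fun i => (hx i).symm, hx, hy⟩

theorem pairwise_adj_pair (h : G.Adj x y) : Pairwise (G.Adj on ![x, y]) :=
  pairwise_adj_vecCons (fun j => by fin_cases j; exact h) Subsingleton.pairwise

theorem adj_of_rook3_adj {f : Fin 3 × Fin 3 → V}
    (hrow : ∀ i, Pairwise (G.Adj on fun j => f (i, j)))
    (hcol : ∀ j, Pairwise (G.Adj on fun i => f (i, j))) {p q : Fin 3 × Fin 3}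
    (hpq : rook3.Adj p q) : G.Adj (f p) (f q) := by
  obtain ⟨i, j⟩ := p
  obtain ⟨i', j'⟩ := q
  obtain ⟨hne, hii' | hjj'⟩ := hpq
  · obtain rfl : i = i' := hii'
    exact hrow i fun hjj' => hne (by rw [hjj'])
  · obtain rfl : j = j' := hjj'
    exact hcol j fun hii' => hne (by rw [hii'])

structure IsCross (G : SimpleGraph V) (v : V) (r c : Fin 2 → V) : Prop where
  adj_row : ∀ j, G.Adj v (r j)
  adj_col : ∀ i, G.Adj v (c i)
  pairwise_row : Pairwise (G.Adj on r)
  pairwise_col : Pairwise (G.Adj on c)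
  not_adj_row_col : ∀ i j, ¬G.Adj (r j) (c i)

theorem IsCross.transpose (h : G.IsCross v r c) : G.IsCross v c r :=
  ⟨h.adj_col, h.adj_row, h.pairwise_col, h.pairwise_row,
    fun j i hij => h.not_adj_row_col i j hij.symm⟩

theorem IsCross.row_ne_col (h : G.IsCross v r c) (i j : Fin 2) : r j ≠ c i := by
  intro hji
  obtain ⟨j', hj'⟩ := exists_ne j
  exact h.not_adj_row_col i j' (hji ▸ h.pairwise_row hj')

structure IsFrame (G : SimpleGraph V) (v : V) (r c : Fin 2 → V) (a : Fin 2 → Fin 2 → V) : Prop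
    extends G.IsCross v r c where
  col_adj : ∀ i j, G.Adj (c i) (a i j)
  row_adj : ∀ i j, G.Adj (r j) (a i j)
  ne_center : ∀ i j, a i j ≠ v

theorem IsFrame.transpose (h : G.IsFrame v r c a) : G.IsFrame v c r fun j i => a i j :=
  ⟨h.toIsCross.transpose, fun j i => h.row_adj i j, fun j i => h.col_adj i j,
    fun j i => h.ne_center i j⟩

theorem frameArray_swap (i j : Fin 3) :
    frameArray v c r (fun j i => a i j) (j, i) = frameArray v r c a (i, j) := by
  cases i using Fin.cases <;> cases j using Fin.cases <;> rfl

variable [Fintype V] [DecidableRel G.Adj]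

theorem existsUnique_adj_adj_of_adj
    (hlam : ∀ u v : V, G.Adj u v → Fintype.card (G.commonNeighbors u v) = 1)
    (h : G.Adj u v) : ∃! w, G.Adj u w ∧ G.Adj v w := by
  obtain ⟨⟨w, hw⟩, hw_unique⟩ := Fintype.card_eq_one_iff.mp (hlam u v h)
  refine ⟨w, G.mem_commonNeighbors.mp hw, fun w' hw' => ?_⟩
  exact congrArg Subtype.val (hw_unique ⟨w', G.mem_commonNeighbors.mpr hw'⟩)

theorem eq_of_adj_adj_of_adj
    (hlam : ∀ u v : V, G.Adj u v → Fintype.card (G.commonNeighbors u v) = 1)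
    (h : G.Adj u v) (hw : G.Adj u w ∧ G.Adj v w) (hx : G.Adj u x ∧ G.Adj v x) : w = x :=
  (existsUnique_adj_adj_of_adj hlam h).unique hw hx

theorem not_adj_of_adj_of_ne
    (hlam : ∀ u v : V, G.Adj u v → Fintype.card (G.commonNeighbors u v) = 1)
    (hvx : G.Adj v x) (hvy : G.Adj v y) (hxy : G.Adj x y) (hvz : G.Adj v z) (hzy : z ≠ y) :
    ¬G.Adj x z :=
  fun hxz => hzy (eq_of_adj_adj_of_adj hlam hvx ⟨hvz, hxz⟩ ⟨hvy, hxy⟩)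

theorem card_neighborFinset_inter [DecidableEq V] (u v : V) :
    #(G.neighborFinset u ∩ G.neighborFinset v) = Fintype.card (G.commonNeighbors u v) := by
  rw [← Set.toFinset_card]
  congr 1
  ext
  simp [mem_commonNeighbors]

theorem adj_of_degree_eq_four
    (hlam : ∀ u v : V, G.Adj u v → Fintype.card (G.commonNeighbors u v) = 1)
    (hv : G.degree v = 4) (hw : G.Adj v w) (hx : G.Adj v x) (hy : G.Adj v y) (hz : G.Adj v z)
    (hwx : G.Adj w x) (hyw : y ≠ w) (hyx : y ≠ x) (hzw : z ≠ w) (hzx : z ≠ x) (hyz : y ≠ z) :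
    G.Adj y z := by
  classical
  obtain ⟨t, ⟨hvt, hyt⟩, -⟩ := existsUnique_adj_adj_of_adj hlam hy
  have htw : t ≠ w := by
    rintro rfl
    exact hyx (eq_of_adj_adj_of_adj hlam hvt ⟨hy, hyt.symm⟩ ⟨hx, hwx⟩)
  have htx : t ≠ x := by
    rintro rfl
    exact hyw (eq_of_adj_adj_of_adj hlam hvt ⟨hy, hyt.symm⟩ ⟨hw, hwx.symm⟩)
  have hrest : #(G.neighborFinset v \ {w, x, y}) ≤ 1 := by
    have hsub : {w, x, y} ⊆ G.neighborFinset v := by simp [insert_subset_iff, hw, hx, hy]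
    rw [card_sdiff_of_subset hsub, card_neighborFinset_eq_degree, hv,
      card_eq_three.mpr ⟨w, x, y, hwx.ne, hyw.symm, hyx.symm, rfl⟩]
  have htz : t = z := card_le_one.mp hrest t (by simp [hvt, htw, htx, hyt.ne.symm]) z
    (by simp [hz, hzw, hzx, hyz.symm])
  exact htz ▸ hyt

-- Sending a common neighbour of `v` and `w` to its partner in the matching `N(v)` is an injection
-- into `N(v) \ N(w)`.
theorem two_mul_card_neighborFinset_inter_le [DecidableEq V]
    (hlam : ∀ u v : V, G.Adj u v → Fintype.card (G.commonNeighbors u v) = 1) (hvw : v ≠ w) :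
    2 * #(G.neighborFinset v ∩ G.neighborFinset w) ≤ G.degree v := by
  set S := G.neighborFinset v ∩ G.neighborFinset w
  have hS : #S ≤ #(G.neighborFinset v \ S) := by
    refine card_le_card_of_forall_subsingleton G.Adj (fun s hs => ?_) fun t ht s hs s' hs' => ?_
    · simp only [S, mem_inter, mem_neighborFinset] at hs
      obtain ⟨t, ⟨hvt, hst⟩, -⟩ := existsUnique_adj_adj_of_adj hlam hs.1
      refine ⟨t, ?_, hst⟩
      simp only [S, mem_sdiff, mem_inter, mem_neighborFinset, hvt, true_and]
      exact fun hwt =>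
        hvw (eq_of_adj_adj_of_adj hlam hst ⟨hs.1.symm, hvt.symm⟩ ⟨hs.2.symm, hwt.symm⟩)
    · simp only [S, mem_sdiff, mem_inter, mem_neighborFinset, Set.mem_ofPred_eq] at ht hs hs'
      exact eq_of_adj_adj_of_adj hlam ht.1 ⟨hs.1.1, hs.2.symm⟩ ⟨hs'.1.1, hs'.2.symm⟩
  rw [card_sdiff_of_subset (show S ⊆ G.neighborFinset v from inter_subset_left),
    card_neighborFinset_eq_degree] at hS
  omega

theorem two_mul_card_neighborFinset_inter_eq [DecidableEq V]
    (hlam : ∀ u v : V, G.Adj u v → Fintype.card (G.commonNeighbors u v) = 1)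
    (hreg : G.IsRegularOfDegree k) (hcard : Fintype.card V + 3 = 3 * k)
    (hvw : v ≠ w) (hadj : ¬G.Adj v w) :
    2 * #(G.neighborFinset v ∩ G.neighborFinset w) = k := by
  set M := (insert v (G.neighborFinset v))ᶜ
  have hM : #M = Fintype.card V - (k + 1) := by
    rw [card_compl, card_insert_of_notMem (by simp), card_neighborFinset_eq_degree, hreg v]
  have hout : ∀ u ∈ G.neighborFinset v, #{z ∈ M | G.Adj z u} = k - 2 := by
    intro u hu
    rw [mem_neighborFinset] at hu
    have hfilter : {z ∈ M | G.Adj z u} = G.neighborFinset u \ insert v (G.neighborFinset v) := by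
      ext z
      simp [M, and_comm, adj_comm]
    have hinter : #(G.neighborFinset u ∩ insert v (G.neighborFinset v)) = 2 := by
      rw [inter_insert_of_mem (by simpa using hu.symm), card_insert_of_notMem (by simp),
        card_neighborFinset_inter, hlam u v hu.symm]
    have hsplit := card_sdiff_add_card_inter (G.neighborFinset u) (insert v (G.neighborFinset v))
    rw [hinter, card_neighborFinset_eq_degree, hreg u] at hsplit
    rw [hfilter]
    omega
  have hle : ∀ z ∈ M, 2 * #(G.neighborFinset v ∩ G.neighborFinset z) ≤ k := fun z hz =>
    hreg v ▸ two_mul_card_neighborFinset_inter_le hlam (by rintro rfl; simp [M] at hz)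
  have hsum : ∑ z ∈ M, 2 * #(G.neighborFinset v ∩ G.neighborFinset z) = ∑ z ∈ M, k := by
    have hcount : ∑ z ∈ M, #(G.neighborFinset v ∩ G.neighborFinset z)
        = ∑ u ∈ G.neighborFinset v, #{z ∈ M | G.Adj z u} := by
      refine Eq.trans (sum_congr rfl fun z _ => ?_)
        (sum_card_bipartiteAbove_eq_sum_card_bipartiteBelow (r := fun z u => G.Adj z u))
      congr 1
      ext u
      simp [bipartiteAbove]
    rw [← mul_sum, hcount, sum_congr rfl hout, sum_const, sum_const, hM,
      card_neighborFinset_eq_degree, hreg v, smul_eq_mul, smul_eq_mul,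
      show Fintype.card V - (k + 1) = 2 * (k - 2) by omega]
    ring
  exact (sum_eq_sum_iff_of_le hle).mp hsum w (by simp [M, hvw.symm, hadj])

theorem Hom.nonempty_iso_of_injective {W : Type*} [Fintype W] {H : SimpleGraph W}
    [DecidableRel H.Adj] (f : H →g G) (hf : Injective f) (hcard : Fintype.card W = Fintype.card V)
    (hH : H.IsRegularOfDegree k) (hG : G.IsRegularOfDegree k) : Nonempty (H ≃g G) := by
  have hbij : Bijective f := (Fintype.bijective_iff_injective_and_card f).mpr ⟨hf, hcard⟩
  refine ⟨⟨Equiv.ofBijective f hbij, fun {x y} => ⟨fun hxy => ?_, f.map_adj⟩⟩⟩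
  have himage : (H.neighborFinset x).map ⟨f, hf⟩ = G.neighborFinset (f x) := by
    refine eq_of_subset_of_card_le (fun z hz => ?_) ?_
    · obtain ⟨y, hy, rfl⟩ := mem_map.mp hz
      exact (mem_neighborFinset _ _ _).mpr (f.map_adj ((mem_neighborFinset _ _ _).mp hy))
    · rw [card_map, card_neighborFinset_eq_degree, card_neighborFinset_eq_degree, hH, hG]
  have hy : f y ∈ (H.neighborFinset x).map ⟨f, hf⟩ := himage ▸ (mem_neighborFinset _ _ _).mpr hxy
  simpa using hy

theorem exists_isCross
    (hlam : ∀ u v : V, G.Adj u v → Fintype.card (G.commonNeighbors u v) = 1)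
    (hv : G.degree v = 4) : ∃ r c, G.IsCross v r c := by
  classical
  obtain ⟨b, hvb⟩ := G.degree_pos_iff_exists_adj v |>.mp (by omega)
  obtain ⟨b', ⟨hvb', hbb'⟩, -⟩ := existsUnique_adj_adj_of_adj hlam hvb
  have hrest : #(G.neighborFinset v \ {b, b'}) = 2 := by
    rw [card_sdiff_of_subset (by simp [insert_subset_iff, hvb, hvb']),
      card_neighborFinset_eq_degree, hv, card_pair hbb'.ne]
  obtain ⟨d, e, hde, hrest_eq⟩ := card_eq_two.mp hrest
  have hd : d ∈ G.neighborFinset v \ {b, b'} := hrest_eq ▸ by simp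
  have he : e ∈ G.neighborFinset v \ {b, b'} := hrest_eq ▸ by simp
  simp only [mem_sdiff, mem_neighborFinset, mem_insert, mem_singleton, not_or] at hd he
  refine ⟨![b, b'], ![d, e], fun j => ?_, fun i => ?_, pairwise_adj_pair hbb',
    pairwise_adj_pair (adj_of_degree_eq_four hlam hv hvb hvb' hd.1 he.1 hbb' hd.2.1 hd.2.2
      he.2.1 he.2.2 hde), fun i j => ?_⟩
  · fin_cases j
    exacts [hvb, hvb']
  · fin_cases i
    exacts [hd.1, he.1]
  · fin_cases i <;> fin_cases j
    · exact not_adj_of_adj_of_ne hlam hvb hvb' hbb' hd.1 hd.2.2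
    · exact not_adj_of_adj_of_ne hlam hvb' hvb hbb'.symm hd.1 hd.2.1
    · exact not_adj_of_adj_of_ne hlam hvb hvb' hbb' he.1 he.2.2
    · exact not_adj_of_adj_of_ne hlam hvb' hvb hbb'.symm he.1 he.2.1

theorem exists_isFrame
    (hlam : ∀ u v : V, G.Adj u v → Fintype.card (G.commonNeighbors u v) = 1)
    (hreg : G.IsRegularOfDegree 4) (hcard : Fintype.card V = 9) (v : V) :
    ∃ r c a, G.IsFrame v r c a := by
  classical
  obtain ⟨r, c, hx⟩ := exists_isCross hlam (hreg v)
  have hsquare : ∀ i j, ∃ a, G.Adj (c i) a ∧ G.Adj (r j) a ∧ a ≠ v := by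
    intro i j
    have hmu := two_mul_card_neighborFinset_inter_eq hlam hreg (by omega) (hx.row_ne_col i j).symm
      fun h => hx.not_adj_row_col i j h.symm
    obtain ⟨a, ha, hav⟩ :=
      exists_mem_ne (show 1 < #(G.neighborFinset (c i) ∩ G.neighborFinset (r j)) by omega) v
    rw [mem_inter, mem_neighborFinset, mem_neighborFinset] at ha
    exact ⟨a, ha.1, ha.2, hav⟩
  choose a hca hra hav using hsquare
  exact ⟨r, c, a, hx, hca, hra, hav⟩

theorem IsFrame.not_adj_center
    (hlam : ∀ u v : V, G.Adj u v → Fintype.card (G.commonNeighbors u v) = 1)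
    (h : G.IsFrame v r c a) (i j : Fin 2) : ¬G.Adj v (a i j) := by
  intro hva
  obtain ⟨j', hj'⟩ := exists_ne j
  refine not_adj_of_adj_of_ne hlam (h.adj_row j) (h.adj_row j') (h.pairwise_row hj'.symm) hva
    ?_ (h.row_adj i j)
  rintro hrj
  exact h.not_adj_row_col i j' (hrj ▸ h.col_adj i j).symm

theorem IsFrame.fst_eq_of_eq
    (hlam : ∀ u v : V, G.Adj u v → Fintype.card (G.commonNeighbors u v) = 1)
    (h : G.IsFrame v r c a) {i i' j j' : Fin 2} (ha : a i j = a i' j') : i = i' := by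
  by_contra hii'
  refine h.ne_center i j (eq_of_adj_adj_of_adj hlam (h.pairwise_col hii') ⟨h.col_adj i j, ?_⟩
    ⟨(h.adj_col i).symm, (h.adj_col i').symm⟩)
  exact ha ▸ h.col_adj i' j'

theorem IsFrame.pairwise_adj_interior
    (hlam : ∀ u v : V, G.Adj u v → Fintype.card (G.commonNeighbors u v) = 1)
    (hreg : G.IsRegularOfDegree 4) (h : G.IsFrame v r c a) (i : Fin 2) :
    Pairwise (G.Adj on a i) := by
  intro j j' hjj'
  obtain ⟨i', hi'⟩ := exists_ne i
  have hne_col : ∀ j, a i j ≠ c i' := fun j hj =>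
    h.not_adj_center hlam i j (hj ▸ h.adj_col i')
  exact adj_of_degree_eq_four hlam (hreg (c i)) (h.adj_col i).symm (h.pairwise_col hi'.symm)
    (h.col_adj i j) (h.col_adj i j') (h.adj_col i') (h.ne_center i j) (hne_col j) (h.ne_center i j')
    (hne_col j') fun hj => hjj' (h.transpose.fst_eq_of_eq hlam hj)

theorem IsFrame.pairwise_adj_frameArray_row
    (hlam : ∀ u v : V, G.Adj u v → Fintype.card (G.commonNeighbors u v) = 1)
    (hreg : G.IsRegularOfDegree 4) (h : G.IsFrame v r c a) (i : Fin 3) :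
    Pairwise (G.Adj on fun j => frameArray v r c a (i, j)) := by
  cases i using Fin.cases
  · exact pairwise_adj_vecCons h.adj_row h.pairwise_row
  · exact pairwise_adj_vecCons (h.col_adj _) (h.pairwise_adj_interior hlam hreg _)

theorem IsFrame.injective_frameArray
    (hlam : ∀ u v : V, G.Adj u v → Fintype.card (G.commonNeighbors u v) = 1)
    (h : G.IsFrame v r c a) : Injective (frameArray v r c a) := by
  have hrv : ∀ j, r j ≠ v := fun j => (h.adj_row j).ne.symm
  have hcv : ∀ i, c i ≠ v := fun i => (h.adj_col i).ne.symm
  have hrc : ∀ i j, r j ≠ c i := h.row_ne_col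
  have har : ∀ i j j', a i j ≠ r j' := fun i j j' hj =>
    h.not_adj_center hlam i j (hj ▸ h.adj_row j')
  have hac : ∀ i j i', a i j ≠ c i' := fun i j i' hi =>
    h.not_adj_center hlam i j (hi ▸ h.adj_col i')
  have hr : Injective r := fun j j' hjj' => by_contra fun hne => (h.pairwise_row hne).ne hjj'
  have hc : Injective c := fun i i' hii' => by_contra fun hne => (h.pairwise_col hne).ne hii'
  have ha : ∀ i j i' j', a i j = a i' j' ↔ i = i' ∧ j = j' := fun i j i' j' =>
    ⟨fun he => ⟨h.fst_eq_of_eq hlam he, h.transpose.fst_eq_of_eq hlam he⟩,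
      by rintro ⟨rfl, rfl⟩; rfl⟩
  rintro ⟨i, j⟩ ⟨k, l⟩ hij
  cases i using Fin.cases <;> cases k using Fin.cases <;> cases j using Fin.cases <;>
    cases l using Fin.cases <;>
    simp [frameArray, hr.eq_iff, hc.eq_iff, ha, hrv, hcv, hrc, har, hac, h.ne_center,
      fun j => (hrv j).symm, fun i => (hcv i).symm, fun i j => (hrc i j).symm,
      fun i j j' => (har i j j').symm, fun i j i' => (hac i j i').symm,
      fun i j => (h.ne_center i j).symm] at hij ⊢ <;> exact hij

theorem IsFrame.exists_injective_hom
    (hlam : ∀ u v : V, G.Adj u v → Fintype.card (G.commonNeighbors u v) = 1)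
    (hreg : G.IsRegularOfDegree 4) (h : G.IsFrame v r c a) :
    ∃ f : rook3 →g G, Injective f := by
  have hcol : ∀ j, Pairwise (G.Adj on fun i => frameArray v r c a (i, j)) := fun j => by
    simpa only [frameArray_swap] using
      h.transpose.pairwise_adj_frameArray_row hlam hreg j
  exact ⟨⟨frameArray v r c a, adj_of_rook3_adj (h.pairwise_adj_frameArray_row hlam hreg) hcol⟩,
    h.injective_frameArray hlam⟩

end SimpleGraph

theorem edge_regular_9_4_1_is_rook_general (V : Type*) [Fintype V]
    (G : SimpleGraph V) [DecidableRel G.Adj]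
    (hcard : Fintype.card V = 9)
    (hreg : G.IsRegularOfDegree 4)
    (hlam : ∀ u v : V, G.Adj u v → Fintype.card (G.commonNeighbors u v) = 1) :
    Nonempty (G ≃g rook3) := by
  obtain ⟨v⟩ : Nonempty V := Fintype.card_pos_iff.mp (by omega)
  obtain ⟨r, c, a, hframe⟩ := exists_isFrame hlam hreg hcard v
  obtain ⟨f, hf⟩ := hframe.exists_injective_hom hlam hreg
  obtain ⟨e⟩ := f.nonempty_iso_of_injective hf (by simp [hcard]) rook3_isRegularOfDegree hreg
  exact ⟨e.symm⟩

/-- Any edge-regular graph with parameters (9,4,1) is isomorphic to the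
3×3 rook graph. -/
theorem edge_regular_9_4_1_is_rook (V : Type*) [Fintype V] [DecidableEq V]
    (G : SimpleGraph V) [DecidableRel G.Adj]
    (hcard : Fintype.card V = 9)
    (hreg : G.IsRegularOfDegree 4)
    (hlam : ∀ u v : V, G.Adj u v → Fintype.card (G.commonNeighbors u v) = 1) :
    Nonempty (G ≃g rook3) :=
  edge_regular_9_4_1_is_rook_general V G hcard hreg hlam
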